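/- With P_k(x) defined as the degree-7 spline polynomial P_k(x) = f(k) + t(Δ-½Δ²+⅓Δ³)f(k) + ½t²(Δ²-Δ³)f(k) + (1/6)t³Δ³f(k) - (23/3)t⁴Δ⁴f(k) + (41/2)t⁵Δ⁴f(k) - (55/3)t⁶Δ⁴f(k) + (11/2)t⁷Δ⁴f(k), where t = x - k (step δ = 1), the adjacent polynomials match to third order at the knot: P_{k-1}^{(a)}(k) = P_k^{(a)}(k) for a = 0, 1, 2, 3 and any f : ℤ → ℝ. -/

import Mathlib

/-- Unit forward difference on functions `ℤ → ℝ`. -/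
def fwd (f : ℤ → ℝ) (k : ℤ) : ℝ := f (k + 1) - f k

/-- The degree-7 spline polynomial `P_k` (step 1), with `t = x - k`. -/
noncomputable def Pk (f : ℤ → ℝ) (k : ℤ) (x : ℝ) : ℝ :=
  f k
    + (x - k) * (fwd f k - (1/2) * fwd (fwd f) k + (1/3) * fwd (fwd (fwd f)) k)
    + (1/2) * (x - k)^2 * (fwd (fwd f) k - fwd (fwd (fwd f)) k)
    + (1/6) * (x - k)^3 * fwd (fwd (fwd f)) k
    + (-(23/3) * (x - k)^4 + (41/2) * (x - k)^5 - (55/3) * (x - k)^6 + (11/2) * (x - k)^7)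
        * fwd (fwd (fwd (fwd f))) k

/-! With `t = x - k`, the cubic part of `P_k` is built from `Δʲf(k) = Δʲf(k-1) + Δʲ⁺¹f(k-1)`,
so it differs from the cubic part of `P_{k-1}` by `Δ⁴f(k-1)` times a cubic in `t`. That cubic is
exactly the third-order Taylor polynomial at `1` of the septic correction
`q(t) = -(23/3)t⁴ + (41/2)t⁵ - (55/3)t⁶ + (11/2)t⁷`, while `q` itself is flat to order 3 at `0`.
Hence `P_k - P_{k-1}` is divisible by `(x - k)⁴`, and its derivatives of order `≤ 3` vanish at `k`. -/

section

variable {𝕜 : Type*} [NontriviallyNormedField 𝕜] [CharZero 𝕜] [CompleteSpace 𝕜]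

theorem iteratedDeriv_eq_zero_of_eq_pow_sub_mul {m n : ℕ} (hmn : m < n) {z₀ : 𝕜}
    {R R₁ : 𝕜 → 𝕜} (hR₁ : ∀ z, AnalyticAt 𝕜 R₁ z) (hR : ∀ z, R z = (z - z₀) ^ n * R₁ z) :
    iteratedDeriv m R z₀ = 0 := by
  obtain ⟨t, rfl⟩ := Nat.exists_eq_add_of_lt hmn
  obtain ⟨R₂, -, hR₂⟩ := iteratedDeriv_mul_pow_sub_of_analytic (t := t + 1) hR₁ hR
  simp [hR₂]

theorem iteratedDeriv_eq_of_sub_eq_pow_sub_mul {m n : ℕ} (hmn : m < n) {z₀ : 𝕜}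
    {g h R₁ : 𝕜 → 𝕜} (hg : ContDiffAt 𝕜 m g z₀) (hh : ContDiffAt 𝕜 m h z₀)
    (hR₁ : ∀ z, AnalyticAt 𝕜 R₁ z) (hgh : ∀ z, g z - h z = (z - z₀) ^ n * R₁ z) :
    iteratedDeriv m g z₀ = iteratedDeriv m h z₀ := by
  rw [← sub_eq_zero, ← iteratedDeriv_sub hg hh]
  exact iteratedDeriv_eq_zero_of_eq_pow_sub_mul hmn hR₁ hgh

end

theorem contDiff_Pk (f : ℤ → ℝ) (k : ℤ) {n : WithTop ℕ∞} : ContDiff ℝ n (Pk f k) := by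
  unfold Pk
  fun_prop

-- The second cubic is `(q(t + 1) - T₃(t)) / t⁴`, `T₃` the Taylor polynomial of `q` at `1`.
theorem Pk_sub_Pk_sub_one (f : ℤ → ℝ) (k : ℤ) (x : ℝ) :
    Pk f k x - Pk f (k - 1) x = (x - k) ^ 4 *
      (fwd (fwd (fwd (fwd f))) k
          * (-(23/3) + (41/2) * (x - k) - (55/3) * (x - k)^2 + (11/2) * (x - k)^3)
        - fwd (fwd (fwd (fwd f))) (k - 1)
          * (37/3 + 26 * (x - k) + (121/6) * (x - k)^2 + (11/2) * (x - k)^3)) := by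
  simp only [Pk, fwd, sub_add_cancel]
  push_cast
  ring

/-- adjacent spline polynomials match to third order at the knot:
`P_{k-1}^{(a)}(k) = P_k^{(a)}(k)` for `a = 0,1,2,3` and any `f : ℤ → ℝ`. -/
theorem stmt9 (f : ℤ → ℝ) (k : ℤ) (a : ℕ) (ha : a ≤ 3) :
    iteratedDeriv a (Pk f (k - 1)) (k : ℝ) = iteratedDeriv a (Pk f k) (k : ℝ) := by
  exact (iteratedDeriv_eq_of_sub_eq_pow_sub_mul (by omega)
    (contDiff_Pk f k).contDiffAt (contDiff_Pk f (k - 1)).contDiffAt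
    (fun _ => by fun_prop) (Pk_sub_Pk_sub_one f k)).symm
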